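/- Two pei-injections f, f': S → S of an orthohedral set S are in the same orbit under the right action of pei(S) (i.e., f' = f∘g for some pei-permutation g of S) if and only if S − f(S) and S − f'(S) are pei-isomorphic. -/

import Mathlib

open Pointwise

namespace PeiPaper

/-- Points of the face of the standard orthant spanned by the canonical basis vectors in `Y`. -/
def stdFace (N : ℕ) (Y : Finset (Fin N)) : Set (Fin N → ℤ) :=
  {v | (∀ i, 0 ≤ v i) ∧ ∀ i, i ∉ Y → v i = 0}

/-- Integral orthogonal matrix. -/
def IsOrthMat {N : ℕ} (A : Matrix (Fin N) (Fin N) ℤ) : Prop :=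
  A * A.transpose = 1

/-- `L` is an integral orthant of rank `k` in `ℤ^N`: an affine-orthogonal image of a
rank-`k` face of the standard orthant. -/
def IsOrthantOfRank {N : ℕ} (L : Set (Fin N → ℤ)) (k : ℕ) : Prop :=
  ∃ (a : Fin N → ℤ) (A : Matrix (Fin N) (Fin N) ℤ) (Y : Finset (Fin N)),
    IsOrthMat A ∧ Y.card = k ∧ L = (fun v => a + A.mulVec v) '' stdFace N Y

def IsOrthant {N : ℕ} (L : Set (Fin N → ℤ)) : Prop := ∃ k, IsOrthantOfRank L k

/-- `S` is orthohedral: a finite union of integral orthants. -/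
def IsOrthohedral {N : ℕ} (S : Set (Fin N → ℤ)) : Prop :=
  ∃ 𝓛 : Set (Set (Fin N → ℤ)), 𝓛.Finite ∧ (∀ L ∈ 𝓛, IsOrthant L) ∧ S = ⋃₀ 𝓛

/-- The rank of a set: the maximal rank of an orthant contained in it. -/
noncomputable def orthRank {N : ℕ} (S : Set (Fin N → ℤ)) : ℕ :=
  sSup {k | ∃ L, IsOrthantOfRank L k ∧ L ⊆ S}

/-- Commensurability: the intersection is nonempty and has the same rank as both sets. -/
def Commensurable {N : ℕ} (L L' : Set (Fin N → ℤ)) : Prop :=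
  (L ∩ L').Nonempty ∧ orthRank L = orthRank (L ∩ L') ∧ orthRank L' = orthRank (L ∩ L')

/-- The rank-`k` orthants contained in `S`. -/
def germSet {N : ℕ} (S : Set (Fin N → ℤ)) (k : ℕ) : Set (Set (Fin N → ℤ)) :=
  {L | IsOrthantOfRank L k ∧ L ⊆ S}

/-- The rank-`k` germs of `S`: commensurability classes of rank-`k` orthants of `S`. -/
def Germ {N : ℕ} (S : Set (Fin N → ℤ)) (k : ℕ) : Type _ :=
  Quot (fun L L' : germSet S k => Commensurable L.1 L'.1)

def germOf {N : ℕ} (S : Set (Fin N → ℤ)) (k : ℕ) (L : germSet S k) : Germ S k :=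
  Quot.mk _ L

/-- The number of rank-`k` germs of `S` (as a natural number; `0` if infinite). -/
noncomputable def heightAt {N : ℕ} (S : Set (Fin N → ℤ)) (k : ℕ) : ℕ :=
  Nat.card (Germ S k)

/-- The height of an orthohedral set: the number of germs of maximal rank. -/
noncomputable def height {N : ℕ} (S : Set (Fin N → ℤ)) : ℕ :=
  heightAt S (orthRank S)

/-- `f` is (the restriction of) an isometry of `ℤ^N` on `L`. -/
def IsometricOn {N : ℕ} (f : (Fin N → ℤ) → (Fin N → ℤ)) (L : Set (Fin N → ℤ)) : Prop :=
  ∃ (a : Fin N → ℤ) (A : Matrix (Fin N) (Fin N) ℤ),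
    IsOrthMat A ∧ ∀ x ∈ L, f x = a + A.mulVec x

/-- `f` is (the restriction of) a translation on `L`. -/
def TranslationOn {N : ℕ} (f : (Fin N → ℤ) → (Fin N → ℤ)) (L : Set (Fin N → ℤ)) : Prop :=
  ∃ a : Fin N → ℤ, ∀ x ∈ L, f x = a + x

/-- `f` is a piecewise-Euclidean-isometric map on `S`. -/
def IsPeiMapOn {N : ℕ} (S : Set (Fin N → ℤ)) (f : (Fin N → ℤ) → (Fin N → ℤ)) : Prop :=
  ∃ 𝓛 : Set (Set (Fin N → ℤ)), 𝓛.Finite ∧ (∀ L ∈ 𝓛, IsOrthant L) ∧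
    S = ⋃₀ 𝓛 ∧ 𝓛.PairwiseDisjoint id ∧ ∀ L ∈ 𝓛, IsometricOn f L

/-- `f` is a piecewise-Euclidean-translation map on `S`. -/
def IsPetMapOn {N : ℕ} (S : Set (Fin N → ℤ)) (f : (Fin N → ℤ) → (Fin N → ℤ)) : Prop :=
  ∃ 𝓛 : Set (Set (Fin N → ℤ)), 𝓛.Finite ∧ (∀ L ∈ 𝓛, IsOrthant L) ∧
    S = ⋃₀ 𝓛 ∧ 𝓛.PairwiseDisjoint id ∧ ∀ L ∈ 𝓛, TranslationOn f L

def IsPeiIso {N : ℕ} (S S' : Set (Fin N → ℤ)) (f : (Fin N → ℤ) → (Fin N → ℤ)) : Prop :=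
  IsPeiMapOn S f ∧ Set.InjOn f S ∧ f '' S = S'

def PeiIsomorphic {N : ℕ} (S S' : Set (Fin N → ℤ)) : Prop := ∃ f, IsPeiIso S S' f

def IsPetIso {N : ℕ} (S S' : Set (Fin N → ℤ)) (f : (Fin N → ℤ) → (Fin N → ℤ)) : Prop :=
  IsPetMapOn S f ∧ Set.InjOn f S ∧ f '' S = S'

def PetIsomorphic {N : ℕ} (S S' : Set (Fin N → ℤ)) : Prop := ∃ f, IsPetIso S S' f

/-- A pei-permutation of `S`: a permutation of `ℤ^N` supported on `S` which is pei on `S`. -/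
def IsPeiPerm {N : ℕ} (S : Set (Fin N → ℤ)) (g : Equiv.Perm (Fin N → ℤ)) : Prop :=
  IsPeiMapOn S ⇑g ∧ ∀ x ∉ S, g x = x

/-- The element `g` has rank at most `k`: it is supported on an orthohedral set of rank `≤ k`. -/
def rankLE {N : ℕ} (g : Equiv.Perm (Fin N → ℤ)) (k : ℕ) : Prop :=
  ∃ T : Set (Fin N → ℤ), IsOrthohedral T ∧ orthRank T ≤ k ∧ ∀ x ∉ T, g x = x

/-- `g` fixes every rank-`k` germ of `S`. -/
def FixesGerm {N : ℕ} (S : Set (Fin N → ℤ)) (k : ℕ) (g : Equiv.Perm (Fin N → ℤ)) : Prop :=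
  ∀ L, IsOrthantOfRank L k → L ⊆ S →
    ∃ L', IsOrthantOfRank L' k ∧ L' ⊆ L ∧ Commensurable L L' ∧
      IsometricOn (⇑g) L' ∧ Commensurable (⇑g '' L') L

/-- `g` fixes every rank-`k` germ of `S` and acts on its tangent coset by a translation. -/
def TranslatesGerm {N : ℕ} (S : Set (Fin N → ℤ)) (k : ℕ) (g : Equiv.Perm (Fin N → ℤ)) : Prop :=
  ∀ L, IsOrthantOfRank L k → L ⊆ S →
    ∃ L' a, IsOrthantOfRank L' k ∧ L' ⊆ L ∧ Commensurable L L' ∧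
      (∀ x ∈ L', g x = a + x) ∧ Commensurable (⇑g '' L') L

/-- `σ` is the map induced by `g` on the rank-`k` germs of `S`. -/
def InducesGermMap {N : ℕ} (S : Set (Fin N → ℤ)) (k : ℕ) (g : Equiv.Perm (Fin N → ℤ))
    (σ : Germ S k → Germ S k) : Prop :=
  ∀ L : germSet S k, ∃ (L'' : Set (Fin N → ℤ)) (M : germSet S k),
    IsOrthantOfRank L'' k ∧ L'' ⊆ L.1 ∧ Commensurable L.1 L'' ∧
    M.1 = ⇑g '' L'' ∧ σ (germOf S k L) = germOf S k M

/-- A finitary permutation which is even (has sign `1` on a finite invariant subset). -/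
def IsEvenFinitary {α : Type*} (σ : Equiv.Perm α) : Prop :=
  ∃ (F : Finset α) (σF : Equiv.Perm F),
    (∀ a ∉ F, σ a = a) ∧ (∀ a : F, σ (a : α) = (σF a : α)) ∧
    @Equiv.Perm.sign F (Classical.decEq _) inferInstance σF = 1

/-- `g` induces an even finitary permutation on the rank-`k` germs of `S`. -/
def IsEvenOnGerms {N : ℕ} (S : Set (Fin N → ℤ)) (k : ℕ) (g : Equiv.Perm (Fin N → ℤ)) : Prop :=
  ∃ σ : Equiv.Perm (Germ S k), InducesGermMap S k g ⇑σ ∧ IsEvenFinitary σ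

/-- Ordering of germs (of arbitrary ranks): `p ≤ q` if they have representatives `L ⊆ L'`. -/
def germLE {N : ℕ} (S : Set (Fin N → ℤ)) (p q : Σ k, Germ S k) : Prop :=
  ∃ (L : germSet S p.1) (L' : germSet S q.1),
    germOf S p.1 L = p.2 ∧ germOf S q.1 L' = q.2 ∧ L.1 ⊆ L'.1

/-- A maximal germ of `S`. -/
def IsMaxGerm {N : ℕ} (S : Set (Fin N → ℤ)) (p : Σ k, Germ S k) : Prop :=
  ∀ q, germLE S p q → germLE S q p

/-- A `0`-based orthant. -/
def IsBasedOrthant {N : ℕ} (L0 : Set (Fin N → ℤ)) : Prop :=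
  ∃ (A : Matrix (Fin N) (Fin N) ℤ) (Y : Finset (Fin N)),
    IsOrthMat A ∧ L0 = (fun v => A.mulVec v) '' stdFace N Y

/-- Two (oriented) parallel orthants. -/
def ParallelOrthants {N : ℕ} (L L' : Set (Fin N → ℤ)) : Prop :=
  ∃ a : Fin N → ℤ, L' = a +ᵥ L

/-- The indicator image `S_τ` of `S`: the union of the `0`-based parallel translates of
the orthants contained in `S`. -/
def indicatorImage {N : ℕ} (S : Set (Fin N → ℤ)) : Set (Fin N → ℤ) :=
  ⋃₀ {L0 | IsBasedOrthant L0 ∧ ∃ a : Fin N → ℤ, (a +ᵥ L0) ⊆ S}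

/-- The height function `h_S`: the number of maximal germs of `S` whose indicator is `L0`. -/
noncomputable def hFun {N : ℕ} (S : Set (Fin N → ℤ)) (L0 : Set (Fin N → ℤ)) : ℕ :=
  Nat.card {p : Σ k, Germ S k //
    IsMaxGerm S p ∧ ∃ L : germSet S p.1, germOf S p.1 L = p.2 ∧ ∃ a : Fin N → ℤ, L.1 = a +ᵥ L0}

/-- `S` is quasi-normal: the maximal based orthants of `S_τ` are exactly the support of `h_S`. -/
def QuasiNormal {N : ℕ} (S : Set (Fin N → ℤ)) : Prop :=
  ∀ L0 : Set (Fin N → ℤ),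
    (IsBasedOrthant L0 ∧ L0 ⊆ indicatorImage S ∧
      ∀ L1, IsBasedOrthant L1 → L1 ⊆ indicatorImage S → L0 ⊆ L1 → L1 ⊆ L0)
    ↔ (IsBasedOrthant L0 ∧ 0 < hFun S L0)

/-- The germ `q` of `S'` is the image of the germ `p` of `S` under the injective pei-map `f`. -/
def GermMapsTo {N : ℕ} (f : (Fin N → ℤ) → (Fin N → ℤ)) (S S' : Set (Fin N → ℤ))
    (p : Σ k, Germ S k) (q : Σ k, Germ S' k) : Prop :=
  p.1 = q.1 ∧ ∃ (L : germSet S p.1) (L'' : Set (Fin N → ℤ)) (M : germSet S' q.1),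
    germOf S p.1 L = p.2 ∧ IsOrthantOfRank L'' p.1 ∧ L'' ⊆ L.1 ∧ Commensurable L.1 L'' ∧
    M.1 = f '' L'' ∧ germOf S' q.1 M = q.2

/-- A stack of `h` parallel rank-`n` orthants. -/
def IsStack {N : ℕ} (S : Set (Fin N → ℤ)) (n h : ℕ) : Prop :=
  ∃ (L0 : Set (Fin N → ℤ)) (a : Fin h → (Fin N → ℤ)),
    IsOrthantOfRank L0 n ∧
    (Pairwise fun i j => Disjoint (a i +ᵥ L0) (a j +ᵥ L0)) ∧
    S = ⋃ i, a i +ᵥ L0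

/-- A coordinate half-space of `ℤ^N`. -/
def IsHalfSpace {N : ℕ} (H : Set (Fin N → ℤ)) : Prop :=
  ∃ (i : Fin N) (c : ℤ), H = {x | x i ≤ c} ∨ H = {x | c ≤ x i}

/-- The canonical embedding `ℤ^N → ℤ^{N+1}`. -/
def emb (N : ℕ) (x : Fin N → ℤ) : Fin (N + 1) → ℤ :=
  fun i => if h : (i : ℕ) < N then x ⟨i, h⟩ else 0

/-- The sum of all matrix entries of a finitely supported family of vectors. -/
noncomputable def totalSum (k : ℕ) (Γ : Type*) : (Γ →₀ (Fin k → ℤ)) →+ ℤ :=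
  Finsupp.liftAddHom (fun _ => ∑ i : Fin k, Pi.evalAddMonoidHom (fun _ => ℤ) i)

/-- The clique (flag) complex of a graph. -/
def cliqueComplex {V : Type*} (G : SimpleGraph V) : Set (Finset V) :=
  {s | s.Nonempty ∧ G.IsClique (s : Set V)}

/-- The geometric realization of a simplicial complex on vertex set `V`. -/
def realization {V : Type*} (K : Set (Finset V)) : Set (V → ℝ) :=
  {f | (∀ v, 0 ≤ f v) ∧ ∃ s ∈ K, Function.support f ⊆ ↑s ∧ ∑ v ∈ s, f v = 1}

/-- A wedge (bouquet) of `n`-spheres indexed by `ι`, with basepoint `b`. -/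
noncomputable def wedgeSpheres (ι : Type) (n : ℕ)
    (b : Metric.sphere (0 : EuclideanSpace ℝ (Fin (n + 1))) 1) : Type :=
  Quot (fun p q : Unit ⊕ (ι × Metric.sphere (0 : EuclideanSpace ℝ (Fin (n + 1))) 1) =>
    (Sum.elim (fun _ => True) (fun pr => pr.2 = b) p) ∧
    (Sum.elim (fun _ => True) (fun qr => qr.2 = b) q))

noncomputable instance (ι : Type) (n : ℕ) (b : Metric.sphere (0 : EuclideanSpace ℝ (Fin (n + 1))) 1) :
    TopologicalSpace (wedgeSpheres ι n b) :=
  letI : TopologicalSpace ι := ⊥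
  instTopologicalSpaceQuot

/-!
If `f' = g ∘ f` on `S` with `g ∈ pei(S)`, then `g` permutes `S` and carries `f(S)` onto `f'(S)`,
so it restricts to a pei-isomorphism `S - f(S) → S - f'(S)`. Conversely, an isomorphism `ψ`
between the complements glues with `f' ∘ f⁻¹` on `f(S)` and the identity off `S` to a
pei-permutation of `S`.

Both restriction and gluing need pieces that are finite disjoint unions of orthants. Call `T`
tame if, for all large `R`, membership in `T` only sees the coordinates clamped to `[-R, R]`.
Tame sets form a Boolean algebra. Orthants are tame, because an integral orthogonal matrix is a
signed permutation. A tame set is the disjoint union of finitely many clamp fibres, and each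
fibre is an orthant.
-/

open Set Filter Function Matrix

section Development

variable {N : ℕ}

section OrthMat

variable {A : Matrix (Fin N) (Fin N) ℤ}

lemma IsOrthMat.transpose_mul (hA : IsOrthMat A) : A.transpose * A = 1 :=
  mul_eq_one_comm.mp hA

lemma IsOrthMat.transpose (hA : IsOrthMat A) : IsOrthMat A.transpose := by
  rw [IsOrthMat, Matrix.transpose_transpose]
  exact hA.transpose_mul

lemma IsOrthMat.mul {B : Matrix (Fin N) (Fin N) ℤ} (hA : IsOrthMat A) (hB : IsOrthMat B) :
    IsOrthMat (A * B) := by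
  rw [IsOrthMat, Matrix.transpose_mul, Matrix.mul_assoc, ← Matrix.mul_assoc B, hB,
    Matrix.one_mul, hA]

lemma IsOrthMat.transpose_mulVec_mulVec (hA : IsOrthMat A) (v : Fin N → ℤ) :
    A.transpose *ᵥ (A *ᵥ v) = v := by
  rw [Matrix.mulVec_mulVec, hA.transpose_mul, Matrix.one_mulVec]

lemma IsOrthMat.mulVec_transpose_mulVec (hA : IsOrthMat A) (v : Fin N → ℤ) :
    A *ᵥ (A.transpose *ᵥ v) = v := by
  rw [Matrix.mulVec_mulVec, hA, Matrix.one_mulVec]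

lemma exists_forall_ne_eq_zero_of_sum_mul_self_eq_one {g : Fin N → ℤ}
    (h : ∑ j, g j * g j = 1) : ∃ j₀, ∀ j ≠ j₀, g j = 0 := by
  obtain ⟨j₀, -, hj₀⟩ := Finset.exists_ne_zero_of_sum_ne_zero (h ▸ one_ne_zero)
  refine ⟨j₀, fun k hk => by_contra fun hgk => ?_⟩
  have hpair : g k * g k + g j₀ * g j₀ ≤ ∑ j, g j * g j := by
    rw [← Finset.sum_pair (f := fun j => g j * g j) hk]
    exact Finset.sum_le_sum_of_subset_of_nonneg (Finset.subset_univ _)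
      fun j _ _ => mul_self_nonneg (g j)
  have := mul_self_pos.mpr hgk
  have := lt_of_le_of_ne (mul_self_nonneg (g j₀)) (Ne.symm hj₀)
  omega

lemma IsOrthMat.sign_mulVec_congr (hA : IsOrthMat A) {w w' : Fin N → ℤ}
    (h : ∀ j, (w j).sign = (w' j).sign) (i : Fin N) :
    ((A *ᵥ w) i).sign = ((A *ᵥ w') i).sign := by
  have hrow : ∑ j, A i j * A i j = 1 := by
    simpa [Matrix.mul_apply, Matrix.one_apply] using congrFun (congrFun hA i) i
  obtain ⟨j₀, hj₀⟩ := exists_forall_ne_eq_zero_of_sum_mul_self_eq_one hrow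
  have hsingle (v : Fin N → ℤ) : (A *ᵥ v) i = A i j₀ * v j₀ :=
    Fintype.sum_eq_single j₀ fun j hj => by simp [hj₀ j hj]
  rw [hsingle, hsingle, Int.sign_mul, Int.sign_mul, h]

end OrthMat

def clampVec (R : ℤ) (v : Fin N → ℤ) : Fin N → ℤ := fun i => max (-R) (min R (v i))

lemma sign_max_min_sub {R c x : ℤ} (hc : |c| < R) :
    (max (-R) (min R x) - c).sign = (x - c).sign := by
  rw [abs_lt] at hc
  rcases lt_trichotomy x c with h | rfl | h
  · rw [Int.sign_eq_neg_one_of_neg (by omega), Int.sign_eq_neg_one_of_neg (by omega)]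
  · rw [sub_self, Int.sign_zero, Int.sign_eq_zero_iff_zero]; omega
  · rw [Int.sign_eq_one_of_pos (by omega), Int.sign_eq_one_of_pos (by omega)]

lemma isOrthant_clampVec_fiber {R : ℤ} (hR : 0 < R) (v : Fin N → ℤ) :
    IsOrthant (clampVec R ⁻¹' {clampVec R v}) := by
  classical
  set w := clampVec R v
  -- coordinates where `w` sits at `±R` are rays pointing away from `0`, the others are fixed
  set ε : Fin N → ℤ := fun i => if w i = -R then -1 else 1
  have hε (i : Fin N) : ε i * ε i = 1 := by simp only [ε]; split_ifs <;> norm_num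
  refine ⟨_, w, diagonal ε, Finset.univ.filter (fun i => w i = R ∨ w i = -R), ?_, rfl, ?_⟩
  · rw [IsOrthMat, diagonal_transpose, diagonal_mul_diagonal, funext hε, diagonal_one]
  ext x
  have hw (i : Fin N) : w i = max (-R) (min R (v i)) := rfl
  simp only [mem_preimage, mem_singleton_iff, mem_image, funext_iff, clampVec, stdFace,
    mem_ofPred_eq, Finset.mem_filter, Finset.mem_univ, true_and, Pi.add_apply, mulVec_diagonal]
  constructor
  · intro hx
    refine ⟨fun i => ε i * (x i - w i), ⟨fun i => ?_, fun i hi => ?_⟩, fun i => ?_⟩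
    · have := hx i; have := hw i; simp only [ε]; split_ifs <;> omega
    · have := hx i; have := hw i; simp only [ε]; split_ifs <;> omega
    · rw [← mul_assoc, hε]; ring
  · rintro ⟨u, ⟨hu, huY⟩, hux⟩ i
    rw [← hux i]
    have := hu i; have := huY i; have := hw i; simp only [ε] at *; split_ifs <;> omega

def IsTame (T : Set (Fin N → ℤ)) : Prop := ∀ᶠ R in atTop, clampVec R ⁻¹' T = T

lemma isTame_biUnion {ι : Type*} {I : Set ι} (hI : I.Finite) {s : ι → Set (Fin N → ℤ)}
    (h : ∀ i ∈ I, IsTame (s i)) : IsTame (⋃ i ∈ I, s i) :=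
  ((eventually_all_finite hI).mpr h).mono fun R hR => by
    simp only [preimage_iUnion₂]
    exact iUnion₂_congr hR

lemma IsTame.diff {T T' : Set (Fin N → ℤ)} (hT : IsTame T) (hT' : IsTame T') :
    IsTame (T \ T') :=
  (hT.and hT').mono fun R hR => by rw [preimage_sdiff, hR.1, hR.2]

lemma IsTame.inter {T T' : Set (Fin N → ℤ)} (hT : IsTame T) (hT' : IsTame T') :
    IsTame (T ∩ T') :=
  (hT.and hT').mono fun R hR => by rw [preimage_inter, hR.1, hR.2]

lemma image_affine_eq_setOf {a : Fin N → ℤ} {A : Matrix (Fin N) (Fin N) ℤ} (hA : IsOrthMat A)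
    (s : Set (Fin N → ℤ)) : (fun u => a + A *ᵥ u) '' s = {x | A.transpose *ᵥ (x - a) ∈ s} := by
  ext x
  constructor
  · rintro ⟨u, hu, rfl⟩
    simpa [hA.transpose_mulVec_mulVec] using hu
  · intro hx
    exact ⟨_, hx, by simp only [hA.mulVec_transpose_mulVec, add_sub_cancel]⟩

lemma stdFace_congr_sign {Y : Finset (Fin N)} {u u' : Fin N → ℤ}
    (h : ∀ j, (u j).sign = (u' j).sign) : u ∈ stdFace N Y ↔ u' ∈ stdFace N Y := by
  have hnonneg (j : Fin N) : 0 ≤ u j ↔ 0 ≤ u' j := by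
    rw [← Int.sign_nonneg_iff, h, Int.sign_nonneg_iff]
  have hzero (j : Fin N) : u j = 0 ↔ u' j = 0 := by
    rw [← Int.sign_eq_zero_iff_zero, h, Int.sign_eq_zero_iff_zero]
  simp only [stdFace, mem_ofPred_eq, hnonneg, hzero]

lemma IsOrthant.isTame {L : Set (Fin N → ℤ)} (hL : IsOrthant L) : IsTame L := by
  obtain ⟨k, a, A, Y, hA, -, rfl⟩ := hL
  filter_upwards [eventually_all.mpr fun i => eventually_gt_atTop |a i|] with R hR
  rw [image_affine_eq_setOf hA]
  ext x
  exact stdFace_congr_sign (hA.transpose.sign_mulVec_congr fun j => sign_max_min_sub (hR j))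

section Isometric

variable {f g : (Fin N → ℤ) → (Fin N → ℤ)} {L T : Set (Fin N → ℤ)}

lemma IsometricOn.mono (h : IsometricOn f L) (hTL : T ⊆ L) : IsometricOn f T := by
  obtain ⟨a, A, hA, he⟩ := h
  exact ⟨a, A, hA, fun x hx => he x (hTL hx)⟩

lemma IsometricOn.congr (h : IsometricOn f L) (hfg : EqOn f g L) : IsometricOn g L := by
  obtain ⟨a, A, hA, he⟩ := h
  exact ⟨a, A, hA, fun x hx => (hfg hx).symm.trans (he x hx)⟩

lemma IsometricOn.comp {M : Set (Fin N → ℤ)} (hg : IsometricOn g M) (hf : IsometricOn f L)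
    (hfLM : MapsTo f L M) : IsometricOn (g ∘ f) L := by
  obtain ⟨b, B, hB, hge⟩ := hg
  obtain ⟨a, A, hA, hfe⟩ := hf
  refine ⟨b + B *ᵥ a, B * A, hB.mul hA, fun x hx => ?_⟩
  rw [Function.comp_apply, hge _ (hfLM hx), hfe x hx, mulVec_add, mulVec_mulVec, add_assoc]

lemma IsometricOn.isOrthant_image (hf : IsometricOn f L) (hL : IsOrthant L) :
    IsOrthant (f '' L) := by
  obtain ⟨k, b, B, Y, hB, hY, rfl⟩ := hL
  obtain ⟨a, A, hA, hfe⟩ := hf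
  refine ⟨k, a + A *ᵥ b, A * B, Y, hA.mul hB, hY, ?_⟩
  rw [← image_comp]
  refine image_congr fun v hv => ?_
  rw [Function.comp_apply, hfe _ (mem_image_of_mem _ hv), mulVec_add, mulVec_mulVec, add_assoc]

lemma isOrthant_preimage_affine {a : Fin N → ℤ} {A : Matrix (Fin N) (Fin N) ℤ}
    (hA : IsOrthMat A) {M : Set (Fin N → ℤ)} (hM : IsOrthant M) :
    IsOrthant ((fun x => a + A *ᵥ x) ⁻¹' M) := by
  rw [← image_eq_preimage_of_inverse (f := fun y => -(A.transpose *ᵥ a) + A.transpose *ᵥ y)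
    (fun y => by simp [mulVec_add, mulVec_neg, hA.mulVec_transpose_mulVec])
    (fun x => by simp [mulVec_add, hA.transpose_mulVec_mulVec])]
  exact IsometricOn.isOrthant_image ⟨_, _, hA.transpose, fun _ _ => rfl⟩ hM

end Isometric

section PeiMap

variable {S T : Set (Fin N → ℤ)} {f g : (Fin N → ℤ) → (Fin N → ℤ)}

lemma IsOrthant.isPeiMapOn (hS : IsOrthant S) (hf : IsometricOn f S) : IsPeiMapOn S f :=
  ⟨{S}, finite_singleton S, by simpa using hS, sUnion_singleton S |>.symm,
    pairwiseDisjoint_singleton _ _, by simpa using hf⟩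

lemma isPeiMapOn_biUnion {ι : Type*} {I : Set ι} (hI : I.Finite) {s : ι → Set (Fin N → ℤ)}
    (hs : I.PairwiseDisjoint s) (h : ∀ i ∈ I, IsPeiMapOn (s i) f) :
    IsPeiMapOn (⋃ i ∈ I, s i) f := by
  choose! 𝓛 hfin horth hcov hdisj hiso using h
  refine ⟨⋃ i ∈ I, 𝓛 i, hI.biUnion hfin, ?_, ?_, ?_, ?_⟩
  · simp only [mem_iUnion₂]
    rintro L ⟨i, hi, hL⟩
    exact horth i hi L hL
  · simp only [sUnion_iUnion]
    exact iUnion₂_congr hcov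
  · refine PairwiseDisjoint.biUnion (hs.mono_on fun i hi => ?_) hdisj
    exact iSup₂_le fun L hL => (hcov i hi).symm ▸ subset_sUnion_of_mem hL
  · simp only [mem_iUnion₂]
    rintro L ⟨i, hi, hL⟩
    exact hiso i hi L hL

lemma IsTame.isPeiMapOn (hS : IsTame S) (hf : IsometricOn f S) : IsPeiMapOn S f := by
  obtain ⟨R, hRS, hR⟩ := (hS.and (eventually_gt_atTop 0)).exists
  have hsat : clampVec R ⁻¹' (clampVec R '' S) = S := by
    refine Subset.antisymm ?_ (subset_preimage_image _ _)
    calc clampVec R ⁻¹' (clampVec R '' S)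
        ⊆ clampVec R ⁻¹' S :=
          preimage_mono ((image_mono hRS.symm.subset).trans (image_preimage_subset _ _))
      _ = S := hRS
  have hfin : (clampVec R '' S).Finite := by
    refine (Set.Finite.pi fun _ => finite_Icc (-R) R).subset ?_
    rintro _ ⟨v, -, rfl⟩ i -
    simp only [clampVec, mem_Icc]
    omega
  rw [← hsat, ← biUnion_preimage_singleton]
  refine isPeiMapOn_biUnion hfin (pairwiseDisjoint_fiber _ _) ?_
  rintro _ ⟨v, hv, rfl⟩
  refine (isOrthant_clampVec_fiber hR v).isPeiMapOn (hf.mono ?_)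
  rw [← hsat]
  exact preimage_mono (singleton_subset_iff.mpr (mem_image_of_mem _ hv))

lemma IsPeiMapOn.isTame (hf : IsPeiMapOn S f) : IsTame S := by
  obtain ⟨𝓛, hfin, horth, rfl, -, -⟩ := hf
  rw [sUnion_eq_biUnion]
  exact isTame_biUnion hfin fun L hL => (horth L hL).isTame

lemma IsPeiMapOn.isTame_image (hf : IsPeiMapOn S f) : IsTame (f '' S) := by
  obtain ⟨𝓛, hfin, horth, rfl, -, hiso⟩ := hf
  rw [sUnion_eq_biUnion, image_iUnion₂]
  exact isTame_biUnion hfin fun L hL => ((hiso L hL).isOrthant_image (horth L hL)).isTame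

lemma IsPeiMapOn.congr (hf : IsPeiMapOn S f) (hfg : EqOn f g S) : IsPeiMapOn S g := by
  obtain ⟨𝓛, hfin, horth, hcov, hdisj, hiso⟩ := hf
  exact ⟨𝓛, hfin, horth, hcov, hdisj, fun L hL =>
    (hiso L hL).congr (hfg.mono (hcov ▸ subset_sUnion_of_mem hL))⟩

lemma IsPeiMapOn.mono (hf : IsPeiMapOn S f) (hT : IsTame T) (hTS : T ⊆ S) :
    IsPeiMapOn T f := by
  obtain ⟨𝓛, hfin, horth, rfl, hdisj, hiso⟩ := hf
  rw [← inter_eq_right.mpr hTS, sUnion_eq_biUnion, iUnion₂_inter]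
  exact isPeiMapOn_biUnion hfin (hdisj.mono_on fun L _ => inter_subset_left) fun L hL =>
    ((horth L hL).isTame.inter hT).isPeiMapOn ((hiso L hL).mono inter_subset_left)

lemma IsPeiMapOn.union (hS : IsPeiMapOn S f) (hT : IsPeiMapOn T f) (hST : Disjoint S T) :
    IsPeiMapOn (S ∪ T) f := by
  obtain ⟨𝓛, hfin, horth, rfl, hdisj, hiso⟩ := hS
  obtain ⟨𝓜, hfin', horth', rfl, hdisj', hiso'⟩ := hT
  refine ⟨𝓛 ∪ 𝓜, hfin.union hfin', ?_, (sUnion_union _ _).symm, hdisj.union hdisj' ?_, ?_⟩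
  · rintro L (hL | hL)
    exacts [horth L hL, horth' L hL]
  · exact fun L hL M hM _ => hST.mono (subset_sUnion_of_mem hL) (subset_sUnion_of_mem hM)
  · rintro L (hL | hL)
    exacts [hiso L hL, hiso' L hL]

lemma IsPeiMapOn.piecewise [DecidablePred (· ∈ S)] (hf : IsPeiMapOn S f) (hg : IsPeiMapOn T g)
    (hST : Disjoint S T) : IsPeiMapOn (S ∪ T) (S.piecewise f g) :=
  (hf.congr (piecewise_eqOn _ _ _).symm).union
    (hg.congr fun _ hx => (piecewise_eq_of_notMem _ _ _ (hST.notMem_of_mem_right hx)).symm) hST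

lemma IsPeiMapOn.comp (hg : IsPeiMapOn (f '' S) g) (hf : IsPeiMapOn S f) :
    IsPeiMapOn S (g ∘ f) := by
  obtain ⟨𝓛, hfin, horth, hcov, hdisj, hiso⟩ := hf
  obtain ⟨𝓜, hfin', horth', hcov', hdisj', hiso'⟩ := hg
  have hS : S = ⋃ p ∈ 𝓛 ×ˢ 𝓜, p.1 ∩ f ⁻¹' p.2 := by
    refine Subset.antisymm (fun x hx => ?_) (iUnion₂_subset fun p hp =>
      inter_subset_left.trans (hcov ▸ subset_sUnion_of_mem hp.1))
    obtain ⟨L, hL, hxL⟩ := mem_sUnion.mp (hcov ▸ hx)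
    obtain ⟨M, hM, hxM⟩ := mem_sUnion.mp (hcov' ▸ mem_image_of_mem f hx)
    exact mem_biUnion (x := (L, M)) ⟨hL, hM⟩ ⟨hxL, hxM⟩
  rw [hS]
  refine isPeiMapOn_biUnion (hfin.prod hfin') ?_ ?_
  · rintro ⟨L, M⟩ ⟨hL, hM⟩ ⟨L', M'⟩ ⟨hL', hM'⟩ hne
    by_cases hLL : L = L'
    · subst hLL
      have hMM : M ≠ M' := fun h => hne (h ▸ rfl)
      exact ((hdisj' hM hM' hMM).preimage f).mono inter_subset_right inter_subset_right
    · exact (hdisj hL hL' hLL).mono inter_subset_left inter_subset_left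
  · rintro ⟨L, M⟩ ⟨hL, hM⟩
    refine IsTame.isPeiMapOn ?_ ((hiso' M hM).comp ((hiso L hL).mono inter_subset_left)
      fun x hx => hx.2)
    obtain ⟨a, A, hA, hfe⟩ := hiso L hL
    rw [EqOn.inter_preimage_eq (fun x hx => hfe x hx)]
    exact (horth L hL).isTame.inter (isOrthant_preimage_affine hA (horth' M hM)).isTame

lemma IsPeiMapOn.invFunOn (hf : IsPeiMapOn S f) (hfi : InjOn f S) :
    IsPeiMapOn (f '' S) (invFunOn f S) := by
  obtain ⟨𝓛, hfin, horth, rfl, hdisj, hiso⟩ := hf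
  rw [show f '' ⋃₀ 𝓛 = ⋃ L ∈ 𝓛, f '' L by rw [sUnion_eq_biUnion, image_iUnion₂]]
  refine isPeiMapOn_biUnion hfin (fun L hL M hM hLM =>
    (hdisj hL hM hLM).image hfi (subset_sUnion_of_mem hL) (subset_sUnion_of_mem hM)) ?_
  intro L hL
  obtain ⟨a, A, hA, hfe⟩ := hiso L hL
  refine ((hiso L hL).isOrthant_image (horth L hL)).isPeiMapOn
    ⟨-(A.transpose *ᵥ a), A.transpose, hA.transpose, ?_⟩
  rintro _ ⟨x, hx, rfl⟩
  rw [hfi.leftInvOn_invFunOn (mem_sUnion_of_mem hx hL), hfe x hx, mulVec_add,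
    hA.transpose_mulVec_mulVec, neg_add_cancel_left]

end PeiMap

lemma bijOn_piecewise {α β : Type*} {s u : Set α} {t v : Set β} {f g : α → β}
    [DecidablePred (· ∈ s)] (hf : BijOn f s t) (hg : BijOn g (u \ s) (v \ t)) (hsu : s ⊆ u)
    (htv : t ⊆ v) : BijOn (s.piecewise f g) u v := by
  have hf' := hf.congr (piecewise_eqOn s f g).symm
  have hg' := hg.congr fun x hx => (piecewise_eq_of_notMem s f g hx.2).symm
  rw [← union_sdiff_cancel hsu, ← union_sdiff_cancel htv]
  exact hf'.union hg' ((injOn_union disjoint_sdiff_right).mpr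
    ⟨hf'.injOn, hg'.injOn, fun x hx y hy hxy => (hg'.mapsTo hy).2 (hxy ▸ hf'.mapsTo hx)⟩)

variable {S : Set (Fin N → ℤ)} {f f' : (Fin N → ℤ) → (Fin N → ℤ)}

lemma peiIsomorphic_sdiff_image_of_isPeiPerm (hf : IsPeiMapOn S f)
    {g : Equiv.Perm (Fin N → ℤ)} (hg : IsPeiPerm S g) (hfg : ∀ x ∈ S, f' x = g (f x)) :
    PeiIsomorphic (S \ f '' S) (S \ f' '' S) := by
  refine ⟨g, hg.1.mono (hf.isTame.diff hf.isTame_image) sdiff_subset, g.injective.injOn, ?_⟩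
  have hgS : g '' S = S := image_perm fun x hx => by_contra fun hxS => hx (hg.2 x hxS)
  rw [image_sdiff g.injective, hgS, ← image_comp]
  exact congrArg (S \ ·) (image_congr fun x hx => (hfg x hx).symm)

lemma exists_isPeiPerm_of_peiIsomorphic (hf : IsPeiMapOn S f) (hfi : InjOn f S)
    (hfS : f '' S ⊆ S) (hf' : IsPeiMapOn S f') (hfi' : InjOn f' S) (hfS' : f' '' S ⊆ S)
    (h : PeiIsomorphic (S \ f '' S) (S \ f' '' S)) :
    ∃ g : Equiv.Perm (Fin N → ℤ), IsPeiPerm S g ∧ ∀ x ∈ S, f' x = g (f x) := by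
  classical
  obtain ⟨ψ, hψ, hψi, hψS⟩ := h
  set φ := f' ∘ invFunOn f S
  have hφ : BijOn φ (f '' S) (f' '' S) :=
    hfi'.bijOn_image.comp (hfi.bijOn_image.symm hfi.bijOn_image.invOn_invFunOn.symm)
  have hφpei : IsPeiMapOn (f '' S) φ := by
    refine IsPeiMapOn.comp ?_ (hf.invFunOn hfi)
    rwa [hfi.invFunOn_image subset_rfl]
  set g := S.piecewise ((f '' S).piecewise φ ψ) id
  have hinner : BijOn ((f '' S).piecewise φ ψ) S S :=
    bijOn_piecewise hφ (hψS ▸ hψi.bijOn_image) hfS hfS'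
  have hg : Function.Bijective g :=
    bijOn_univ.mp (bijOn_piecewise hinner (bijOn_id _) (subset_univ _) (subset_univ _))
  refine ⟨Equiv.ofBijective g hg, ⟨?_, fun x hx => piecewise_eq_of_notMem _ _ _ hx⟩,
    fun x hx => ?_⟩
  · have hpei := hφpei.piecewise hψ disjoint_sdiff_right
    rw [union_sdiff_cancel hfS] at hpei
    exact hpei.congr (piecewise_eqOn _ _ _).symm
  · have hfx := mem_image_of_mem f hx
    simp only [Equiv.ofBijective_apply, g, piecewise_eq_of_mem _ _ _ (hfS hfx),
      piecewise_eq_of_mem _ _ _ hfx, φ, Function.comp_apply, hfi.leftInvOn_invFunOn hx]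

end Development

theorem stmt19_general {N : ℕ} (S : Set (Fin N → ℤ))
    (f f' : (Fin N → ℤ) → (Fin N → ℤ))
    (hf : IsPeiMapOn S f) (hfi : Set.InjOn f S) (hfS : f '' S ⊆ S)
    (hf' : IsPeiMapOn S f') (hfi' : Set.InjOn f' S) (hfS' : f' '' S ⊆ S) :
    (∃ g : Equiv.Perm (Fin N → ℤ), IsPeiPerm S g ∧ ∀ x ∈ S, f' x = g (f x)) ↔
      PeiIsomorphic (S \ (f '' S)) (S \ (f' '' S)) :=
  ⟨fun ⟨_, hg, hfg⟩ => peiIsomorphic_sdiff_image_of_isPeiPerm hf hg hfg,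
    exists_isPeiPerm_of_peiIsomorphic hf hfi hfS hf' hfi' hfS'⟩

/-- two pei-injections of `S` are in the same `pei(S)`-orbit iff the
complements of their images are pei-isomorphic. -/
theorem stmt19 {N : ℕ} (S : Set (Fin N → ℤ)) (hS : IsOrthohedral S)
    (f f' : (Fin N → ℤ) → (Fin N → ℤ))
    (hf : IsPeiMapOn S f) (hfi : Set.InjOn f S) (hfS : f '' S ⊆ S)
    (hf' : IsPeiMapOn S f') (hfi' : Set.InjOn f' S) (hfS' : f' '' S ⊆ S) :
    (∃ g : Equiv.Perm (Fin N → ℤ), IsPeiPerm S g ∧ ∀ x ∈ S, f' x = g (f x)) ↔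
      PeiIsomorphic (S \ (f '' S)) (S \ (f' '' S)) :=
  stmt19_general S f f' hf hfi hfS hf' hfi' hfS'

end PeiPaper
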